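/- Two-function hypercontractivity induction: let r, s ≥ 0 and 0 ≤ ρ ≤ √(rs) ≤ 1, and suppose that for all F, G : {-1,1} → ℝ one has E_{(x₁,y₁) ρ-correlated}[F(x₁)G(y₁)] ≤ ‖F‖_{1+r} ‖G‖_{1+s}. Then for all n and all f, g : {-1,1}^n → ℝ, E_{(x,y) ρ-correlated}[f(x)g(y)] ≤ ‖f‖_{1+r} ‖g‖_{1+s}. -/
import Mathlib


open Finset

/-- `E[f(x) g(y)]` for a `ρ`-correlated pair of uniform random strings `(x, y)` in `{-1,1}^n`. -/
noncomputable def corrE {n : ℕ} (ρ : ℝ) (f g : (Fin n → Bool) → ℝ) : ℝ :=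
  ∑ x : Fin n → Bool, ∑ y : Fin n → Bool,
    (2 ^ n : ℝ)⁻¹ * (∏ i, if x i = y i then (1 + ρ) / 2 else (1 - ρ) / 2) * f x * g y

/-- `L^p` norm of `f : {-1,1}^n → ℝ` with respect to the uniform measure. -/
noncomputable def pnorm {n : ℕ} (p : ℝ) (f : (Fin n → Bool) → ℝ) : ℝ :=
  ((2 ^ n : ℝ)⁻¹ * ∑ x : Fin n → Bool, |f x| ^ p) ^ (1 / p)

/-- `E[F(x₁) G(y₁)]` for a single `ρ`-correlated pair of uniform random bits. -/
noncomputable def corrE1 (ρ : ℝ) (F G : Bool → ℝ) : ℝ :=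
  ∑ a : Bool, ∑ b : Bool,
    (2 : ℝ)⁻¹ * (if a = b then (1 + ρ) / 2 else (1 - ρ) / 2) * F a * G b

/-- `L^p` norm of a one-bit function with respect to the uniform measure on `{-1,1}`. -/
noncomputable def pnorm1 (p : ℝ) (F : Bool → ℝ) : ℝ :=
  ((2 : ℝ)⁻¹ * (|F true| ^ p + |F false| ^ p)) ^ (1 / p)

lemma pnorm_nonneg {n : ℕ} (p : ℝ) (f : (Fin n → Bool) → ℝ) : 0 ≤ pnorm p f := by
  apply Real.rpow_nonneg
  positivity

lemma sum_succ_split {n : ℕ} (h : (Fin (n+1) → Bool) → ℝ) :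
    ∑ x : Fin (n+1) → Bool, h x = ∑ a : Bool, ∑ x : Fin n → Bool, h (Fin.cons a x) := by
  rw [← Equiv.sum_comp (Fin.consEquiv (fun _ => Bool)) h, Fintype.sum_prod_type]
  rfl

lemma double_sum_split {n : ℕ} (T : (Fin (n+1) → Bool) → (Fin (n+1) → Bool) → ℝ) :
    ∑ x : Fin (n+1) → Bool, ∑ y : Fin (n+1) → Bool, T x y
      = ∑ a : Bool, ∑ b : Bool, ∑ x : Fin n → Bool, ∑ y : Fin n → Bool,
          T (Fin.cons a x) (Fin.cons b y) := by
  rw [sum_succ_split (fun x => ∑ y, T x y)]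
  refine Finset.sum_congr rfl fun a _ => ?_
  rw [Finset.sum_comm, sum_succ_split (fun y => ∑ x : Fin n → Bool, T (Fin.cons a x) y)]
  exact Finset.sum_congr rfl fun b _ => Finset.sum_comm

lemma pnorm_succ {n : ℕ} (p : ℝ) (hp : 0 < p) (f : (Fin (n+1) → Bool) → ℝ) :
    pnorm p f = pnorm1 p (fun a => pnorm p (fun x => f (Fin.cons a x))) := by
  have hFa : ∀ a : Bool,
      |pnorm p (fun x => f (Fin.cons a x))| ^ p
        = (2 ^ n : ℝ)⁻¹ * ∑ x : Fin n → Bool, |f (Fin.cons a x)| ^ p := by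
    intro a
    rw [abs_of_nonneg (pnorm_nonneg _ _), pnorm, one_div,
      Real.rpow_inv_rpow (by positivity) hp.ne']
  rw [pnorm, pnorm1, hFa, hFa, sum_succ_split (fun x => |f x| ^ p)]
  congr 1
  rw [Fintype.sum_bool]
  rw [pow_succ]
  ring

lemma corrE_succ {n : ℕ} (ρ : ℝ) (f g : (Fin (n+1) → Bool) → ℝ) :
    corrE ρ f g = ∑ a : Bool, ∑ b : Bool,
      (2 : ℝ)⁻¹ * (if a = b then (1 + ρ) / 2 else (1 - ρ) / 2) *
        corrE ρ (fun x => f (Fin.cons a x)) (fun y => g (Fin.cons b y)) := by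
  rw [corrE, double_sum_split]
  refine Finset.sum_congr rfl fun a _ => Finset.sum_congr rfl fun b _ => ?_
  rw [corrE, Finset.mul_sum]
  refine Finset.sum_congr rfl fun x _ => ?_
  rw [Finset.mul_sum]
  refine Finset.sum_congr rfl fun y _ => ?_
  rw [Fin.prod_univ_succ]
  simp only [Fin.cons_zero, Fin.cons_succ]
  rw [pow_succ]
  ring

/-- Two-function hypercontractivity induction: the `n = 1` case implies the general case. -/
theorem hypercontractivity_induction (r s ρ : ℝ) (hr : 0 ≤ r) (hs : 0 ≤ s)
    (hρ0 : 0 ≤ ρ) (hρ : ρ ≤ Real.sqrt (r * s)) (hrs : Real.sqrt (r * s) ≤ 1)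
    (base : ∀ F G : Bool → ℝ, corrE1 ρ F G ≤ pnorm1 (1 + r) F * pnorm1 (1 + s) G) :
    ∀ (n : ℕ) (f g : (Fin n → Bool) → ℝ),
      corrE ρ f g ≤ pnorm (1 + r) f * pnorm (1 + s) g := by
  have hρ1 : ρ ≤ 1 := hρ.trans hrs
  have hpr : (0:ℝ) < 1 + r := by linarith
  have hps : (0:ℝ) < 1 + s := by linarith
  intro n
  induction n with
  | zero =>
    intro f g
    have hsum : ∀ F : (Fin 0 → Bool) → ℝ, ∑ x : Fin 0 → Bool, F x = F Fin.elim0 := by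
      intro F
      rw [Fintype.sum_unique]
      exact congrArg F (funext fun i => i.elim0)
    have hd : ∀ (h : (Fin 0 → Bool) → ℝ) (p : ℝ), 0 < p → pnorm p h = |h Fin.elim0| := by
      intro h p hp
      rw [pnorm, hsum (fun x => |h x| ^ p), pow_zero, inv_one, one_mul, one_div,
        Real.rpow_rpow_inv (abs_nonneg _) hp.ne']
    rw [corrE, hsum, hsum, hd f _ hpr, hd g _ hps]
    simp only [pow_zero, inv_one, one_mul, Finset.univ_eq_empty, Finset.prod_empty]
    exact (le_abs_self _).trans_eq (abs_mul _ _)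
  | succ n ih =>
    intro f g
    rw [corrE_succ]
    set F : Bool → ℝ := fun a => pnorm (1 + r) (fun x => f (Fin.cons a x)) with hF
    set G : Bool → ℝ := fun b => pnorm (1 + s) (fun y => g (Fin.cons b y)) with hG
    have step1 : ∑ a : Bool, ∑ b : Bool,
        (2 : ℝ)⁻¹ * (if a = b then (1 + ρ) / 2 else (1 - ρ) / 2) *
          corrE ρ (fun x => f (Fin.cons a x)) (fun y => g (Fin.cons b y))
        ≤ corrE1 ρ F G := by
      rw [corrE1]
      refine Finset.sum_le_sum fun a _ => Finset.sum_le_sum fun b _ => ?_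
      have hw : (0:ℝ) ≤ (2 : ℝ)⁻¹ * (if a = b then (1 + ρ) / 2 else (1 - ρ) / 2) := by
        split <;> linarith
      calc (2 : ℝ)⁻¹ * (if a = b then (1 + ρ) / 2 else (1 - ρ) / 2) *
          corrE ρ (fun x => f (Fin.cons a x)) (fun y => g (Fin.cons b y))
          ≤ (2 : ℝ)⁻¹ * (if a = b then (1 + ρ) / 2 else (1 - ρ) / 2) * (F a * G b) :=
            mul_le_mul_of_nonneg_left (ih _ _) hw
        _ = (2 : ℝ)⁻¹ * (if a = b then (1 + ρ) / 2 else (1 - ρ) / 2) * F a * G b := by ring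
    refine step1.trans ((base F G).trans ?_)
    rw [pnorm_succ (1+r) hpr f, pnorm_succ (1+s) hps g, ← hF, ← hG]
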